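/- arXiv:math/0010243 — 4 statements merged into one kernel-verified Lean document; each statement's English description precedes it below -/
import Mathlib

section
/- Let $L$ be a hermitian positive definite biinfinite Toeplitz matrix (bounded and boundedly invertible on $\ell^2(\mathbb{Z})$), $y \in \ell^2(\mathbb{Z})$, and $x = L^{-1}y$. Let $x^{(n)} = L_n^{-1} P_n y$ be the finite section solution, where $L_n = P_n L P_n$. Then $x^{(n)} \to x$ in $\ell^2(\mathbb{Z})$ as $n \to \infty$. -/
open Complex Real Filter

noncomputable abbrev l2Z : Type := lp (fun _ : ℤ => ℂ) 2

/-!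
Céa's lemma for the finite section method. Both `x_n` and `L⁻¹ y` solve `L u = y` on the
coordinates `|k| < n`, so the error of `x_n` against the truncation `z_n = P_n x` of the exact
solution is supported where the residual `L x_n - y` vanishes. Coercivity of `L` then bounds
`‖x_n - x‖` by a constant multiple of `‖x - P_n x‖`, which tends to zero.
-/

section Galerkin

variable {𝕜 E : Type*} [RCLike 𝕜] [NormedAddCommGroup E] [InnerProductSpace 𝕜 E]
  {L : E →L[𝕜] E} {δ : ℝ}

theorem mul_norm_sub_le_of_inner_eq_zero
    (hL : ∀ v, δ * ‖v‖ ^ 2 ≤ RCLike.re (inner 𝕜 v (L v))) {u x z : E}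
    (horth : inner 𝕜 (u - z) (L u - L x) = 0) :
    δ * ‖u - z‖ ≤ ‖L‖ * ‖x - z‖ := by
  set w := u - z
  have hLw : L w = (L u - L x) + L (x - z) := by simp only [w, map_sub]; abel
  have hsq : δ * ‖w‖ ^ 2 ≤ ‖w‖ * (‖L‖ * ‖x - z‖) :=
    calc δ * ‖w‖ ^ 2 ≤ RCLike.re (inner 𝕜 w (L w)) := hL w
      _ = RCLike.re (inner 𝕜 w (L (x - z))) := by rw [hLw, inner_add_right, horth, zero_add]
      _ ≤ ‖inner 𝕜 w (L (x - z))‖ := RCLike.re_le_norm _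
      _ ≤ ‖w‖ * ‖L (x - z)‖ := norm_inner_le_norm _ _
      _ ≤ ‖w‖ * (‖L‖ * ‖x - z‖) := by gcongr; exact L.le_opNorm _
  rcases (norm_nonneg w).eq_or_lt with hw | hw
  · rw [← hw, mul_zero]; positivity
  · nlinarith

theorem norm_sub_le_of_inner_eq_zero (hδ : 0 < δ)
    (hL : ∀ v, δ * ‖v‖ ^ 2 ≤ RCLike.re (inner 𝕜 v (L v))) {u x z : E}
    (horth : inner 𝕜 (u - z) (L u - L x) = 0) :
    ‖u - x‖ ≤ (‖L‖ / δ + 1) * ‖x - z‖ := by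
  have hw : ‖u - z‖ ≤ ‖L‖ / δ * ‖x - z‖ := by
    rw [div_mul_eq_mul_div, le_div_iff₀ hδ, mul_comm]
    exact mul_norm_sub_le_of_inner_eq_zero hL horth
  calc ‖u - x‖ ≤ ‖u - z‖ + ‖z - x‖ := norm_sub_le_norm_sub_add_norm_sub _ _ _
    _ ≤ ‖L‖ / δ * ‖x - z‖ + ‖x - z‖ := by rw [norm_sub_rev z]; gcongr
    _ = (‖L‖ / δ + 1) * ‖x - z‖ := by ring

end Galerkin

namespace lp

variable {ι 𝕜 : Type*} [RCLike 𝕜] {G : ι → Type*} [∀ i, NormedAddCommGroup (G i)]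
  [∀ i, InnerProductSpace 𝕜 (G i)]

theorem inner_eq_zero_of_disjoint_support (u v : lp G 2) (h : ∀ i, u i = 0 ∨ v i = 0) :
    inner 𝕜 u v = 0 := by
  rw [lp.inner_eq_tsum]
  convert tsum_zero with i
  rcases h i with h' | h' <;> simp [h']

theorem sum_single_apply_of_notMem [DecidableEq ι] {p : ENNReal} {s : Finset ι}
    (f : ∀ i, G i) {j : ι} (hj : j ∉ s) : (∑ i ∈ s, lp.single p i (f i)) j = 0 := by
  rw [lp.coeFn_sum, Finset.sum_apply]
  exact Finset.sum_eq_zero fun i hi => lp.single_apply_ne p i _ (ne_of_mem_of_not_mem hi hj).symm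

end lp

theorem tendsto_finset_Ioo_neg_atTop :
    Tendsto (fun n : ℕ => Finset.Ioo (-(n : ℤ)) n) atTop atTop := by
  refine tendsto_atTop_finset_of_monotone (fun m n hmn => ?_) fun k => ?_
  · apply Finset.Ioo_subset_Ioo <;> omega
  · exact ⟨(|k| + 1).toNat, by rw [Finset.mem_Ioo, ← abs_lt]; omega⟩

theorem finite_section_convergence_general
    (L : l2Z →L[ℂ] l2Z)
    (δ : ℝ) (hδ : 0 < δ)
    (hL_pd : ∀ x : l2Z, δ * ‖x‖ ^ 2 ≤ (inner ℂ x (L x) : ℂ).re)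
    (Linv : l2Z →L[ℂ] l2Z)
    (hLinv₁ : L.comp Linv = ContinuousLinearMap.id ℂ l2Z)
    (y : l2Z)
    (xn : ℕ → l2Z)
    (hsupp : ∀ (n : ℕ) (k : ℤ), (n : ℤ) ≤ |k| → (xn n : ∀ _ : ℤ, ℂ) k = 0)
    (hsolve : ∀ (n : ℕ) (k : ℤ), |k| < (n : ℤ) →
      (L (xn n) : ∀ _ : ℤ, ℂ) k = (y : ∀ _ : ℤ, ℂ) k) :
    Tendsto xn atTop (nhds (Linv y)) := by
  set x := Linv y
  have hLx : L x = y := by simpa using congrArg (· y) hLinv₁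
  set z : ℕ → l2Z := fun n => ∑ k ∈ Finset.Ioo (-(n : ℤ)) n, lp.single 2 k (x k)
  have hz : Tendsto z atTop (nhds x) :=
    (lp.hasSum_single ENNReal.ofNat_ne_top x).comp tendsto_finset_Ioo_neg_atTop
  have horth (n : ℕ) : inner ℂ (xn n - z n) (L (xn n) - L x) = 0 := by
    refine lp.inner_eq_zero_of_disjoint_support _ _ fun k => ?_
    rcases le_or_gt (n : ℤ) |k| with hk | hk
    · have hzk : z n k = 0 :=
        lp.sum_single_apply_of_notMem _ (by rw [Finset.mem_Ioo, ← abs_lt]; omega)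
      left; simp [hsupp n k hk, hzk]
    · right; simp [hLx, hsolve n k hk]
  have hbound (n : ℕ) : ‖xn n - x‖ ≤ (‖L‖ / δ + 1) * ‖x - z n‖ :=
    norm_sub_le_of_inner_eq_zero hδ hL_pd (horth n)
  have hzero : Tendsto (fun n => (‖L‖ / δ + 1) * ‖x - z n‖) atTop (nhds 0) := by
    simpa [norm_sub_rev x] using
      (tendsto_iff_norm_sub_tendsto_zero.mp hz).const_mul (‖L‖ / δ + 1)
  exact tendsto_iff_norm_sub_tendsto_zero.mpr
    (squeeze_zero (fun _ => norm_nonneg _) hbound hzero)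

theorem finite_section_convergence
    (a : ℤ → ℂ)
    (L : l2Z →L[ℂ] l2Z) (hL_sa : IsSelfAdjoint L)
    (e : ℤ → l2Z) (he : ∀ k : ℤ, e k = lp.single 2 k 1)
    (hToep : ∀ k l : ℤ, (inner ℂ (e k) (L (e l)) : ℂ) = a (k - l))
    (δ : ℝ) (hδ : 0 < δ)
    (hL_pd : ∀ x : l2Z, δ * ‖x‖ ^ 2 ≤ (inner ℂ x (L x) : ℂ).re)
    (Linv : l2Z →L[ℂ] l2Z)
    (hLinv₁ : L.comp Linv = ContinuousLinearMap.id ℂ l2Z)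
    (hLinv₂ : Linv.comp L = ContinuousLinearMap.id ℂ l2Z)
    (y : l2Z)
    (xn : ℕ → l2Z)
    (hsupp : ∀ (n : ℕ) (k : ℤ), (n : ℤ) ≤ |k| → (xn n : ∀ _ : ℤ, ℂ) k = 0)
    (hsolve : ∀ (n : ℕ) (k : ℤ), |k| < (n : ℤ) →
      (L (xn n) : ∀ _ : ℤ, ℂ) k = (y : ∀ _ : ℤ, ℂ) k) :
    Tendsto xn atTop (nhds (Linv y)) :=
  finite_section_convergence_general L δ hδ hL_pd Linv hLinv₁ y xn hsupp hsolve
end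

section
/- Let $L$ be a hermitian positive definite biinfinite Toeplitz matrix with entries $L_{kl} = a_{k-l}$ where $|a_k| \le c e^{-\gamma|k|}$, and let $y$ satisfy $|y_k| \le c' e^{-\gamma|k|}$. Let $x = L^{-1}y$ and $x^{(n)} = L_n^{-1}P_n y$. Then there exist $0 < \gamma_1 < \gamma$ and a constant $c_1$ (depending on $\gamma_1$ and the condition number of $L$) such that $\|x - x^{(n)}\|_{\ell^2} \le c_1 e^{-\gamma_1 n}$. -/
open Complex Real Filter

/-!
By coercivity of `L` and Galerkin orthogonality (Céa's lemma), `‖x - xₙ‖ ≤ ‖L‖ / δ · ‖x - Pₙ x‖`,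
so it suffices that the tail of `x = L⁻¹ y` beyond `|k| ≥ n` is `O(e^{-θ n})`. To see this,
weight `x` by the bounded weight `w k = e^{θ min(|k|, n)}`. Because the symbol `a` decays
exponentially, `w L w⁻¹ - L` is dominated by convolution with the kernel
`c e^{-γ|m|} (e^{θ|m|} - 1)`, whose `ℓ¹` norm tends to `0` with `θ`. For small `θ` the
conjugated operator stays coercive, which gives `‖w x‖ ≤ 2 ‖w y‖ / δ` uniformly in `n`; this
plays the role of Jaffard's theorem. Since `w = e^{θ n}` on the tail, the tail of `x` is at most
`e^{-θ n} ‖w x‖`.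
-/

open scoped InnerProductSpace Topology

theorem Real.abs_exp_sub_one_le_exp_abs_sub_one (s : ℝ) : |rexp s - 1| ≤ rexp |s| - 1 := by
  rcases le_total 0 s with hs | hs
  · rw [abs_of_nonneg hs, abs_of_nonneg (by linarith [one_le_exp hs])]
  · have h := add_one_le_exp s
    rw [abs_of_nonpos hs, abs_of_nonpos (by linarith [exp_le_one_iff.mpr hs])]
    nlinarith [add_one_le_exp (-s), exp_pos s]

theorem summable_exp_neg_mul_abs {s : ℝ} (hs : 0 < s) :
    Summable fun k : ℤ => rexp (-s * |(k : ℝ)|) :=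
  .of_nat_of_neg (by simpa using summable_pow_mul_exp_neg_nat_mul 0 hs)
    (by simpa using summable_pow_mul_exp_neg_nat_mul 0 hs)

theorem hasSum_tsum_sub_mul {g h : ℤ → ℝ} (hg0 : 0 ≤ g) (hh0 : 0 ≤ h) (hg : Summable g)
    (hh : Summable h) :
    HasSum (fun k => ∑' l, g (k - l) * h l) ((∑' m, g m) * ∑' l, h l) := by
  let shear : ℤ × ℤ ≃ ℤ × ℤ :=
    ⟨fun p => (p.1 + p.2, p.2), fun p => (p.1 - p.2, p.2), fun p => by simp, fun p => by simp⟩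
  have hprod : HasSum (fun p : ℤ × ℤ => g p.1 * h p.2) ((∑' m, g m) * ∑' l, h l) :=
    hg.hasSum.mul hh.hasSum (hg.mul_of_nonneg hh hg0 hh0)
  have hF : HasSum (fun p : ℤ × ℤ => g (p.1 - p.2) * h p.2) ((∑' m, g m) * ∑' l, h l) := by
    rw [← shear.hasSum_iff]
    simpa [shear, Function.comp_def] using hprod
  exact hF.prod_fiberwise fun k => (hF.summable.prod_factor k).hasSum

section Coercive

variable {𝕜 E : Type*} [RCLike 𝕜] [NormedAddCommGroup E] [InnerProductSpace 𝕜 E]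
  {L : E →L[𝕜] E} {δ : ℝ}

theorem norm_le_of_coercive_of_re_inner_sub_le (hL : ∀ v, δ * ‖v‖ ^ 2 ≤ RCLike.re ⟪v, L v⟫_𝕜)
    {z b : E} {ε : ℝ} (h : RCLike.re ⟪z, L z - b⟫_𝕜 ≤ ε * ‖z‖ ^ 2) : (δ - ε) * ‖z‖ ≤ ‖b‖ := by
  have hsplit : RCLike.re ⟪z, L z⟫_𝕜 = RCLike.re ⟪z, b⟫_𝕜 + RCLike.re ⟪z, L z - b⟫_𝕜 := by
    rw [inner_sub_right, map_sub]; ring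
  have hzb : (δ - ε) * ‖z‖ * ‖z‖ ≤ ‖b‖ * ‖z‖ := by
    nlinarith [hL z, re_inner_le_norm (𝕜 := 𝕜) z b]
  rcases (norm_nonneg z).eq_or_lt with hz | hz
  · rw [← hz, mul_zero]; exact norm_nonneg b
  · exact le_of_mul_le_mul_right hzb hz

/-- Céa's lemma. -/
theorem norm_sub_le_of_coercive_of_inner_eq_zero (hδ : 0 < δ)
    (hL : ∀ v, δ * ‖v‖ ^ 2 ≤ RCLike.re ⟪v, L v⟫_𝕜) {x x' p : E}
    (horth : ⟪p - x', L (x - x')⟫_𝕜 = 0) : ‖x - x'‖ ≤ ‖L‖ / δ * ‖x - p‖ := by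
  have hsplit : ⟪x - x', L (x - x')⟫_𝕜 = ⟪x - p, L (x - x')⟫_𝕜 := by
    rw [← sub_add_sub_cancel x p x', inner_add_left, sub_add_sub_cancel, horth, add_zero]
  have hbound : δ * ‖x - x'‖ * ‖x - x'‖ ≤ ‖L‖ * ‖x - p‖ * ‖x - x'‖ := by
    calc δ * ‖x - x'‖ * ‖x - x'‖ ≤ RCLike.re ⟪x - x', L (x - x')⟫_𝕜 := by nlinarith [hL (x - x')]
      _ ≤ ‖x - p‖ * ‖L (x - x')‖ := hsplit ▸ re_inner_le_norm _ _
      _ ≤ ‖x - p‖ * (‖L‖ * ‖x - x'‖) := by gcongr; exact L.le_opNorm _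
      _ = ‖L‖ * ‖x - p‖ * ‖x - x'‖ := by ring
  rcases (norm_nonneg (x - x')).eq_or_lt with he | he
  · rw [← he]; positivity
  · rw [div_mul_eq_mul_div, le_div_iff₀ hδ]
    nlinarith [le_of_mul_le_mul_right hbound he]

end Coercive

noncomputable def expWeight (θ : ℝ) (n : ℕ) (k : ℤ) : ℝ := rexp (θ * min |(k : ℝ)| n)

theorem expWeight_pos (θ : ℝ) (n : ℕ) (k : ℤ) : 0 < expWeight θ n k := exp_pos _

theorem expWeight_le_exp_mul_abs {θ : ℝ} (hθ : 0 ≤ θ) (n : ℕ) (k : ℤ) :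
    expWeight θ n k ≤ rexp (θ * |(k : ℝ)|) :=
  exp_le_exp.mpr (mul_le_mul_of_nonneg_left (min_le_left _ _) hθ)

theorem expWeight_of_le_abs (θ : ℝ) {n : ℕ} {k : ℤ} (hk : (n : ℝ) ≤ |(k : ℝ)|) :
    expWeight θ n k = rexp (θ * n) := by
  rw [expWeight, min_eq_right hk]

theorem abs_expWeight_sub_le {θ : ℝ} (hθ : 0 ≤ θ) (n : ℕ) (k l : ℤ) :
    |expWeight θ n k - expWeight θ n l| ≤
      expWeight θ n l * (rexp (θ * |((k - l : ℤ) : ℝ)|) - 1) := by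
  set s := θ * (min |(k : ℝ)| n - min |(l : ℝ)| n)
  have hs : |s| ≤ θ * |((k - l : ℤ) : ℝ)| := by
    have hmin : |min |(k : ℝ)| n - min |(l : ℝ)| n| ≤ |(k : ℝ) - l| :=
      (abs_min_sub_min_le_max _ _ _ _).trans (max_le (abs_abs_sub_abs_le_abs_sub _ _) (by simp))
    rw [abs_mul, abs_of_nonneg hθ, Int.cast_sub]
    exact mul_le_mul_of_nonneg_left hmin hθ
  have hk : expWeight θ n k = expWeight θ n l * rexp s := by
    rw [expWeight, expWeight, ← Real.exp_add]; congr 1; ring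
  rw [hk, ← mul_sub_one, abs_mul, abs_of_pos (expWeight_pos θ n l)]
  exact mul_le_mul_of_nonneg_left ((abs_exp_sub_one_le_exp_abs_sub_one s).trans (by gcongr))
    (expWeight_pos θ n l).le

noncomputable def commutatorBound (c γ θ : ℝ) (m : ℤ) : ℝ :=
  c * rexp (-γ * |(m : ℝ)|) * (rexp (θ * |(m : ℝ)|) - 1)

theorem commutatorBound_nonneg {c θ : ℝ} (hc : 0 ≤ c) (hθ : 0 ≤ θ) (γ : ℝ) (m : ℤ) :
    0 ≤ commutatorBound c γ θ m :=
  mul_nonneg (by positivity) (sub_nonneg.mpr (one_le_exp (by positivity)))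

theorem summable_commutatorBound (c : ℝ) {γ θ : ℝ} (hθ : 0 ≤ θ) (hθγ : θ < γ) :
    Summable (commutatorBound c γ θ) := by
  refine (((summable_exp_neg_mul_abs (sub_pos.mpr hθγ)).sub
    (summable_exp_neg_mul_abs (hθ.trans_lt hθγ))).mul_left c).congr fun m => ?_
  rw [commutatorBound, mul_assoc, mul_sub_one, ← Real.exp_add, mul_sub]
  ring_nf

theorem exists_tsum_commutatorBound_le (c : ℝ) {γ ε : ℝ} (hγ : 0 < γ) (hε : 0 < ε) :
    ∃ θ, 0 < θ ∧ θ < γ ∧ ∑' m, commutatorBound c γ θ m ≤ ε := by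
  have hbound : ∀ᶠ θ in 𝓝 (0 : ℝ),
      ∀ m, ‖commutatorBound c γ θ m‖ ≤ |c| * rexp (-(γ / 2) * |(m : ℝ)|) := by
    filter_upwards [Ioo_mem_nhds (neg_lt_zero.mpr (half_pos hγ)) (half_pos hγ)] with θ hθ m
    have hexp : |rexp (θ * |(m : ℝ)|) - 1| ≤ rexp (γ / 2 * |(m : ℝ)|) := by
      refine (abs_exp_sub_one_le_exp_abs_sub_one _).trans ((sub_le_self _ zero_le_one).trans ?_)
      rw [abs_mul, abs_abs]
      gcongr
      exact abs_le.mpr ⟨hθ.1.le, hθ.2.le⟩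
    calc ‖commutatorBound c γ θ m‖
        = |c| * rexp (-γ * |(m : ℝ)|) * |rexp (θ * |(m : ℝ)|) - 1| := by
          simp only [commutatorBound, norm_mul, norm_eq_abs, abs_exp]
      _ ≤ |c| * rexp (-γ * |(m : ℝ)|) * rexp (γ / 2 * |(m : ℝ)|) := by gcongr
      _ = |c| * rexp (-(γ / 2) * |(m : ℝ)|) := by rw [mul_assoc, ← Real.exp_add]; ring_nf
  have hcont (m : ℤ) : Continuous fun θ => commutatorBound c γ θ m := by
    unfold commutatorBound; fun_prop
  have htendsto : Tendsto (fun θ => ∑' m, commutatorBound c γ θ m) (𝓝 0) (𝓝 0) := by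
    simpa [commutatorBound] using tendsto_tsum_of_dominated_convergence
      ((summable_exp_neg_mul_abs (half_pos hγ)).mul_left |c|) (fun m => (hcont m).tendsto 0) hbound
  obtain ⟨θ, hθε, hθ⟩ := ((htendsto.eventually (ge_mem_nhds hε)).filter_mono nhdsWithin_le_nhds
    |>.and (Ioo_mem_nhdsGT hγ)).exists
  exact ⟨θ, hθ.1, hθ.2, hθε⟩

namespace l2Z

theorem hasSum_norm_sq (v : l2Z) : HasSum (fun k => ‖v k‖ ^ 2) (‖v‖ ^ 2) := by
  simpa using lp.hasSum_norm (p := 2) (by norm_num) v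

theorem norm_le_sqrt_tsum_sq {v : l2Z} {b : ℤ → ℝ} (hb : Summable fun k => b k ^ 2)
    (hv : ∀ k, ‖v k‖ ≤ b k) : ‖v‖ ≤ √(∑' k, b k ^ 2) :=
  le_sqrt_of_sq_le <| hasSum_le (fun k => pow_le_pow_left₀ (norm_nonneg _) (hv k) 2)
    (hasSum_norm_sq v) hb.hasSum

theorem inner_eq_zero_of_forall_eq_zero_or {u v : l2Z} (h : ∀ k, u k = 0 ∨ v k = 0) :
    ⟪u, v⟫_ℂ = 0 := by
  rw [lp.inner_eq_tsum]
  refine (tsum_congr fun k => ?_).trans tsum_zero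
  rcases h k with h | h <;> simp [h]

/-- Schur's test for a convolution kernel `g ∈ ℓ¹(ℤ)`. -/
theorem re_inner_le_of_norm_le_tsum_sub_mul {z E : l2Z} {g : ℤ → ℝ} (hg0 : 0 ≤ g)
    (hg : Summable g) (hE : ∀ k, ‖E k‖ ≤ ∑' l, g (k - l) * ‖z l‖) :
    (⟪z, E⟫_ℂ).re ≤ (∑' m, g m) * ‖z‖ ^ 2 := by
  have hgk (k : ℤ) : HasSum (fun l => g (k - l)) (∑' m, g m) :=
    (Equiv.subLeft k).hasSum_iff.mpr hg.hasSum
  have hgz (k : ℤ) : Summable fun l => g (k - l) * ‖z l‖ ^ 2 :=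
    (hgk k).summable.mul_right (‖z‖ ^ 2) |>.of_nonneg_of_le
      (fun l => mul_nonneg (hg0 _) (sq_nonneg _)) fun l => mul_le_mul_of_nonneg_left
        (pow_le_pow_left₀ (norm_nonneg _) (lp.norm_apply_le_norm two_ne_zero z l) 2) (hg0 _)
  set q : ℤ → ℝ := fun k => ∑' l, g (k - l) * ((‖z k‖ ^ 2 + ‖z l‖ ^ 2) / 2)
  have hq_term (k : ℤ) : HasSum (fun l => g (k - l) * ((‖z k‖ ^ 2 + ‖z l‖ ^ 2) / 2))
      (((∑' m, g m) * ‖z k‖ ^ 2 + ∑' l, g (k - l) * ‖z l‖ ^ 2) / 2) := by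
    refine ((((hgk k).mul_right (‖z k‖ ^ 2)).add (hgz k).hasSum).div_const 2).congr_fun
      fun l => ?_
    ring
  have hq : HasSum q ((∑' m, g m) * ‖z‖ ^ 2) := by
    have hconv :=
      hasSum_tsum_sub_mul hg0 (fun l => sq_nonneg ‖z l‖) hg (hasSum_norm_sq z).summable
    have h := (((hasSum_norm_sq z).mul_left (∑' m, g m)).add hconv).div_const 2
    rw [(hasSum_norm_sq z).tsum_eq, add_self_div_two] at h
    exact h.congr_fun fun k => (hq_term k).tsum_eq
  have hpoint (k : ℤ) : (⟪z k, E k⟫_ℂ).re ≤ q k := by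
    have hAMGM (l : ℤ) : g (k - l) * (‖z k‖ * ‖z l‖) ≤ g (k - l) * ((‖z k‖ ^ 2 + ‖z l‖ ^ 2) / 2) :=
      mul_le_mul_of_nonneg_left (by nlinarith [sq_nonneg (‖z k‖ - ‖z l‖)]) (hg0 _)
    calc (⟪z k, E k⟫_ℂ).re ≤ ‖z k‖ * ‖E k‖ := (re_le_norm _).trans (norm_inner_le_norm _ _)
      _ ≤ ‖z k‖ * ∑' l, g (k - l) * ‖z l‖ := mul_le_mul_of_nonneg_left (hE k) (norm_nonneg _)
      _ = ∑' l, g (k - l) * (‖z k‖ * ‖z l‖) := by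
        rw [← tsum_mul_left]; exact tsum_congr fun l => by ring
      _ ≤ q k := Summable.tsum_le_tsum hAMGM ((hq_term k).summable.of_nonneg_of_le
          (fun l => mul_nonneg (hg0 _) (by positivity)) hAMGM) (hq_term k).summable
  rw [lp.inner_eq_tsum]
  exact hasSum_le hpoint (Complex.hasSum_re (lp.summable_inner z E).hasSum) hq

theorem hasSum_apply_of_inner_single {L : l2Z →L[ℂ] l2Z} {a : ℤ → ℂ}
    (hL : ∀ k l : ℤ, ⟪lp.single 2 k (1 : ℂ), L (lp.single 2 l 1)⟫_ℂ = a (k - l)) (v : l2Z)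
    (k : ℤ) : HasSum (fun l => a (k - l) * v l) (L v k) := by
  refine ((lp.hasSum_single ENNReal.ofNat_ne_top v).mapL
    ((lp.evalCLM ℂ (fun _ : ℤ => ℂ) 2 k).comp L)).congr_fun fun l => ?_
  have hsingle : lp.single 2 l (v l) = v l • lp.single (E := fun _ : ℤ => ℂ) 2 l 1 := by
    rw [← lp.single_smul, smul_eq_mul, mul_one]
  have hcoord : L (lp.single 2 l 1) k = a (k - l) := by
    simpa [lp.inner_single_left] using hL k l
  simp [lp.evalCLM, hsingle, hcoord, mul_comm]

noncomputable def weighted (θ : ℝ) (n : ℕ) (v : l2Z) : l2Z :=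
  ⟨fun k => (expWeight θ n k : ℂ) * v k, (lp.memℓp v).const_mul (rexp (|θ| * n) : ℂ) |>.mono'
    fun k => by
      simp only [norm_mul, Complex.norm_real, norm_eq_abs, abs_exp, expWeight]
      gcongr
      · exact le_abs_self θ
      · exact min_le_right _ _⟩

@[simp] theorem weighted_apply (θ : ℝ) (n : ℕ) (v : l2Z) (k : ℤ) :
    weighted θ n v k = expWeight θ n k * v k := rfl

def truncate (n : ℕ) (v : l2Z) : l2Z :=
  ⟨fun k => if |k| < n then v k else 0, (lp.memℓp v).mono' fun k => by split_ifs <;> simp⟩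

@[simp] theorem truncate_apply (n : ℕ) (v : l2Z) (k : ℤ) :
    truncate n v k = if |k| < n then v k else 0 := rfl

theorem norm_sub_truncate_le (θ : ℝ) (n : ℕ) (v : l2Z) :
    ‖v - truncate n v‖ ≤ rexp (-θ * n) * ‖weighted θ n v‖ := by
  rw [← abs_of_pos (exp_pos (-θ * n)), ← Real.norm_eq_abs, ← norm_smul]
  refine lp.norm_mono two_ne_zero fun k => ?_
  by_cases hk : |k| < n
  · simp only [lp.coeFn_sub, Pi.sub_apply, truncate_apply, hk, if_true, sub_self, norm_zero]
    positivity
  · have hk' : (n : ℝ) ≤ |(k : ℝ)| := by exact_mod_cast not_lt.mp hk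
    simp only [lp.coeFn_sub, Pi.sub_apply, truncate_apply, hk, if_false, sub_zero,
      lp.coeFn_smul, Pi.smul_apply, weighted_apply, expWeight_of_le_abs θ hk', norm_smul,
      norm_mul, Complex.norm_real, Real.norm_eq_abs, abs_exp, ← mul_assoc, ← Real.exp_add]
    simp

section Toeplitz

variable {L : l2Z →L[ℂ] l2Z} {a : ℤ → ℂ} {c γ θ : ℝ}

theorem norm_apply_weighted_sub_le (hL : ∀ v k, HasSum (fun l => a (k - l) * v l) (L v k))
    (ha : ∀ k : ℤ, ‖a k‖ ≤ c * rexp (-γ * |(k : ℝ)|)) (hc : 0 ≤ c) (hθ : 0 ≤ θ) (hθγ : θ < γ)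
    (n : ℕ) (v : l2Z) (k : ℤ) :
    ‖L (weighted θ n v) k - expWeight θ n k * L v k‖ ≤
      ∑' l, commutatorBound c γ θ (k - l) * ‖weighted θ n v l‖ := by
  have hdiff : HasSum (fun l => a (k - l) * ((expWeight θ n l - expWeight θ n k : ℝ) : ℂ) * v l)
      (L (weighted θ n v) k - expWeight θ n k * L v k) :=
    ((hL _ k).sub ((hL v k).mul_left _)).congr_fun fun l => by
      simp only [weighted_apply]; push_cast; ring
  have hbound : Summable fun l => commutatorBound c γ θ (k - l) * ‖weighted θ n v l‖ :=
    ((Equiv.subLeft k).summable_iff.mpr (summable_commutatorBound c hθ hθγ)).mul_right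
      ‖weighted θ n v‖ |>.of_nonneg_of_le
      (fun l => mul_nonneg (commutatorBound_nonneg hc hθ _ _) (norm_nonneg _))
      fun l => mul_le_mul_of_nonneg_left (lp.norm_apply_le_norm two_ne_zero _ l)
        (commutatorBound_nonneg hc hθ _ _)
  refine hdiff.norm_le_of_bounded hbound.hasSum fun l => ?_
  rw [norm_mul, norm_mul, Complex.norm_real, norm_eq_abs, abs_sub_comm, weighted_apply, norm_mul,
    Complex.norm_real, norm_eq_abs, abs_of_pos (expWeight_pos θ n l)]
  calc ‖a (k - l)‖ * |expWeight θ n k - expWeight θ n l| * ‖v l‖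
      ≤ c * rexp (-γ * |((k - l : ℤ) : ℝ)|) *
          (expWeight θ n l * (rexp (θ * |((k - l : ℤ) : ℝ)|) - 1)) * ‖v l‖ := by
        gcongr
        · exact ha _
        · exact abs_expWeight_sub_le hθ n k l
    _ = commutatorBound c γ θ (k - l) * (expWeight θ n l * ‖v l‖) := by
        rw [commutatorBound]; ring

theorem norm_weighted_le_of_coercive (hL : ∀ v k, HasSum (fun l => a (k - l) * v l) (L v k))
    (ha : ∀ k : ℤ, ‖a k‖ ≤ c * rexp (-γ * |(k : ℝ)|)) (hc : 0 ≤ c) {δ : ℝ}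
    (hcoer : ∀ x : l2Z, δ * ‖x‖ ^ 2 ≤ (⟪x, L x⟫_ℂ).re) (hθ : 0 ≤ θ) (hθγ : θ < γ) (n : ℕ)
    (x : l2Z) :
    (δ - ∑' m, commutatorBound c γ θ m) * ‖weighted θ n x‖ ≤ ‖weighted θ n (L x)‖ :=
  norm_le_of_coercive_of_re_inner_sub_le (𝕜 := ℂ) (L := L) hcoer <|
    re_inner_le_of_norm_le_tsum_sub_mul
    (commutatorBound_nonneg hc hθ γ) (summable_commutatorBound c hθ hθγ) fun k => by
      rw [lp.coeFn_sub, Pi.sub_apply, weighted_apply]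
      exact norm_apply_weighted_sub_le hL ha hc hθ hθγ n x k

theorem inner_truncate_sub_eq_zero {x x' : l2Z} {n : ℕ}
    (hsupp : ∀ k : ℤ, (n : ℤ) ≤ |k| → x' k = 0) (hsolve : ∀ k : ℤ, |k| < n → L x' k = L x k) :
    ⟪truncate n x - x', L (x - x')⟫_ℂ = 0 :=
  inner_eq_zero_of_forall_eq_zero_or fun k => by
    by_cases hk : |k| < n
    · right; simp [hsolve k hk]
    · left; simp [hk, hsupp k (not_lt.mp hk)]

end Toeplitz

theorem norm_weighted_le {y : l2Z} {c' γ θ : ℝ}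
    (hy : ∀ k : ℤ, ‖y k‖ ≤ c' * rexp (-γ * |(k : ℝ)|)) (hθ : 0 ≤ θ) (hθγ : θ < γ) (n : ℕ) :
    ‖weighted θ n y‖ ≤ √(∑' k : ℤ, (c' * rexp (-(γ - θ) * |(k : ℝ)|)) ^ 2) := by
  have hsq : Summable fun k : ℤ => c' ^ 2 * rexp (-(2 * (γ - θ)) * |(k : ℝ)|) :=
    (summable_exp_neg_mul_abs (by linarith)).mul_left (c' ^ 2)
  refine norm_le_sqrt_tsum_sq (hsq.congr fun k => ?_) fun k => ?_
  · rw [mul_pow, ← Real.exp_nat_mul]; ring_nf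
  · rw [weighted_apply, norm_mul, Complex.norm_real, norm_eq_abs, abs_of_pos (expWeight_pos θ n k)]
    calc expWeight θ n k * ‖y k‖ ≤ rexp (θ * |(k : ℝ)|) * (c' * rexp (-γ * |(k : ℝ)|)) :=
          mul_le_mul (expWeight_le_exp_mul_abs hθ n k) (hy k) (norm_nonneg _) (exp_pos _).le
      _ = c' * rexp (-(γ - θ) * |(k : ℝ)|) := by rw [mul_left_comm, ← Real.exp_add]; ring_nf

end l2Z

theorem finite_section_exponential_rate_general
    (a : ℤ → ℂ) (c c' γ : ℝ) (hγ : 0 < γ)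
    (ha : ∀ k : ℤ, ‖a k‖ ≤ c * Real.exp (-γ * |(k:ℝ)|))
    (L : l2Z →L[ℂ] l2Z)
    (e : ℤ → l2Z) (he : ∀ k : ℤ, e k = lp.single 2 k 1)
    (hToep : ∀ k l : ℤ, (inner ℂ (e k) (L (e l)) : ℂ) = a (k - l))
    (δ : ℝ) (hδ : 0 < δ)
    (hL_pd : ∀ x : l2Z, δ * ‖x‖ ^ 2 ≤ (inner ℂ x (L x) : ℂ).re)
    (Linv : l2Z →L[ℂ] l2Z)
    (hLinv₁ : L.comp Linv = ContinuousLinearMap.id ℂ l2Z)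
    (y : l2Z)
    (hy : ∀ k : ℤ, ‖(y : ∀ _ : ℤ, ℂ) k‖ ≤ c' * Real.exp (-γ * |(k:ℝ)|))
    (xn : ℕ → l2Z)
    (hsupp : ∀ (n : ℕ) (k : ℤ), (n : ℤ) ≤ |k| → (xn n : ∀ _ : ℤ, ℂ) k = 0)
    (hsolve : ∀ (n : ℕ) (k : ℤ), |k| < (n : ℤ) →
      (L (xn n) : ∀ _ : ℤ, ℂ) k = (y : ∀ _ : ℤ, ℂ) k) :
    ∃ γ₁, 0 < γ₁ ∧ γ₁ < γ ∧ ∃ c₁ > 0, ∀ n : ℕ,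
      ‖Linv y - xn n‖ ≤ c₁ * Real.exp (-γ₁ * n) := by
  set x := Linv y
  have hLx : L x = y := by simpa using congr($hLinv₁ y)
  have hL := l2Z.hasSum_apply_of_inner_single (fun k l => by simpa only [he] using hToep k l)
  have hc : 0 ≤ c := nonneg_of_mul_nonneg_left ((norm_nonneg _).trans (ha 0)) (exp_pos _)
  obtain ⟨θ, hθ, hθγ, hkernel⟩ := exists_tsum_commutatorBound_le c hγ (half_pos hδ)
  set B := √(∑' k : ℤ, (c' * rexp (-(γ - θ) * |(k : ℝ)|)) ^ 2)
  refine ⟨θ, hθ, hθγ, 2 * ‖L‖ * B / δ ^ 2 + 1, by positivity, fun n => ?_⟩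
  have hweighted : δ / 2 * ‖l2Z.weighted θ n x‖ ≤ B :=
    calc δ / 2 * ‖l2Z.weighted θ n x‖
        ≤ (δ - ∑' m, commutatorBound c γ θ m) * ‖l2Z.weighted θ n x‖ := by gcongr; linarith
      _ ≤ ‖l2Z.weighted θ n (L x)‖ :=
        l2Z.norm_weighted_le_of_coercive hL ha hc hL_pd hθ.le hθγ n x
      _ ≤ B := hLx ▸ l2Z.norm_weighted_le hy hθ.le hθγ n
  have horth := l2Z.inner_truncate_sub_eq_zero (hsupp n) fun k hk =>
    (hsolve n k hk).trans (congrFun (congrArg _ hLx) k).symm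
  calc ‖x - xn n‖ ≤ ‖L‖ / δ * ‖x - l2Z.truncate n x‖ :=
        norm_sub_le_of_coercive_of_inner_eq_zero (𝕜 := ℂ) hδ hL_pd horth
    _ ≤ ‖L‖ / δ * (rexp (-θ * n) * (2 * B / δ)) := by
        gcongr
        exact (l2Z.norm_sub_truncate_le θ n x).trans
          (by gcongr; exact (le_div_iff₀ hδ).mpr (by linarith))
    _ = 2 * ‖L‖ * B / δ ^ 2 * rexp (-θ * n) := by field_simp
    _ ≤ (2 * ‖L‖ * B / δ ^ 2 + 1) * rexp (-θ * n) := by gcongr; linarith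

theorem finite_section_exponential_rate
    (a : ℤ → ℂ) (c c' γ : ℝ) (hc : 0 < c) (hc' : 0 < c') (hγ : 0 < γ)
    (ha : ∀ k : ℤ, ‖a k‖ ≤ c * Real.exp (-γ * |(k:ℝ)|))
    (L : l2Z →L[ℂ] l2Z) (hL_sa : IsSelfAdjoint L)
    (e : ℤ → l2Z) (he : ∀ k : ℤ, e k = lp.single 2 k 1)
    (hToep : ∀ k l : ℤ, (inner ℂ (e k) (L (e l)) : ℂ) = a (k - l))
    (δ : ℝ) (hδ : 0 < δ)
    (hL_pd : ∀ x : l2Z, δ * ‖x‖ ^ 2 ≤ (inner ℂ x (L x) : ℂ).re)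
    (Linv : l2Z →L[ℂ] l2Z)
    (hLinv₁ : L.comp Linv = ContinuousLinearMap.id ℂ l2Z)
    (hLinv₂ : Linv.comp L = ContinuousLinearMap.id ℂ l2Z)
    (y : l2Z)
    (hy : ∀ k : ℤ, ‖(y : ∀ _ : ℤ, ℂ) k‖ ≤ c' * Real.exp (-γ * |(k:ℝ)|))
    (xn : ℕ → l2Z)
    (hsupp : ∀ (n : ℕ) (k : ℤ), (n : ℤ) ≤ |k| → (xn n : ∀ _ : ℤ, ℂ) k = 0)
    (hsolve : ∀ (n : ℕ) (k : ℤ), |k| < (n : ℤ) →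
      (L (xn n) : ∀ _ : ℤ, ℂ) k = (y : ∀ _ : ℤ, ℂ) k) :
    ∃ γ₁, 0 < γ₁ ∧ γ₁ < γ ∧ ∃ c₁ > 0, ∀ n : ℕ,
      ‖Linv y - xn n‖ ≤ c₁ * Real.exp (-γ₁ * n) :=
  finite_section_exponential_rate_general a c c' γ hγ ha L e he hToep δ hδ hL_pd Linv hLinv₁ y hy xn
    hsupp hsolve
end

section
/- Let $\gamma > \gamma_2 > 0$ and let $B, M$ be $n \times n$ matrices with $|B_{kl}| \le c\, e^{-\gamma(n - |k-l|)}$ and $|M_{kl}| \le c_2\, e^{-\gamma_2 |k-l|}$. Then there is a constant $c_3$ depending only on $c, c_2, \gamma, \gamma_2$ (not on $n$) such that $|(BM)_{kl}| \le c_3\, e^{-\gamma_2(n - |k-l|)}$ for all $0 \le k, l \le n-1$. -/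
/-!
The decay of `B` at rate `γ` away from the anti-corners absorbs the decay of `M` at the smaller
rate `γ₂` away from the diagonal: by the triangle inequality `|k - j| ≤ |k - l| + |j - l|`, the
`j`-th term of `(B * M) k l` is at most `c c₂ e^{-γ₂ (n - |k - l|)} e^{-(γ - γ₂)(n - |k - j|)}`.
Since `n - |k - j| ≥ min j (n - 1 - j)`, the leftover factors sum to at most two geometric series
of ratio `e^{-(γ - γ₂)}`, uniformly in `n`.
-/

open Real
open Finset

theorem exp_corner_mul_exp_diag_le {γ γ₂ N x y z : ℝ} (hγ₂ : 0 ≤ γ₂) :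
    exp (-γ * (N - |x - y|)) * exp (-γ₂ * |y - z|) ≤
      exp (-γ₂ * (N - |x - z|)) * exp (-(γ - γ₂) * (N - |x - y|)) := by
  rw [← exp_add, ← exp_add, exp_le_exp]
  nlinarith [mul_nonneg hγ₂ (sub_nonneg.2 (abs_sub_le x z y)), abs_sub_comm y z]

theorem Fin.le_sub_abs_sub_or_rev_le {n : ℕ} (k j : Fin n) :
    ((j : ℕ) : ℝ) ≤ n - |(k : ℝ) - j| ∨ ((Fin.rev j : ℕ) : ℝ) ≤ n - |(k : ℝ) - j| := by
  have hk : (k : ℝ) + 1 ≤ n := by exact_mod_cast k.isLt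
  have hrev : ((Fin.rev j : ℕ) : ℝ) = n - 1 - j := by
    rw [Fin.val_rev]; push_cast [Nat.sub_sub, Nat.cast_sub (Nat.succ_le_of_lt j.isLt)]; ring
  rw [hrev]
  rcases le_total (j : ℝ) k with h | h
  · left; rw [abs_of_nonneg (sub_nonneg.2 h)]; linarith
  · right; rw [abs_of_nonpos (sub_nonpos.2 h)]; linarith [(k : ℕ).cast_nonneg (α := ℝ)]

theorem exp_neg_mul_corner_le {δ : ℝ} (hδ : 0 ≤ δ) {n : ℕ} (k j : Fin n) :
    exp (-δ * (n - |(k : ℝ) - j|)) ≤ exp (-δ) ^ (j : ℕ) + exp (-δ) ^ (Fin.rev j : ℕ) := by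
  have hanti : ∀ m : ℕ, (m : ℝ) ≤ n - |(k : ℝ) - j| →
      exp (-δ * (n - |(k : ℝ) - j|)) ≤ exp (-δ) ^ m := by
    intro m hm
    rw [← exp_nat_mul, exp_le_exp]
    nlinarith
  rcases Fin.le_sub_abs_sub_or_rev_le k j with h | h
  · linarith [hanti _ h, pow_nonneg (exp_pos (-δ)).le (Fin.rev j : ℕ)]
  · linarith [hanti _ h, pow_nonneg (exp_pos (-δ)).le (j : ℕ)]

theorem sum_exp_neg_mul_corner_le {δ : ℝ} (hδ : 0 < δ) {n : ℕ} (k : Fin n) :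
    ∑ j : Fin n, exp (-δ * (n - |(k : ℝ) - j|)) ≤ 2 * (1 - exp (-δ))⁻¹ := by
  set r := exp (-δ)
  have hgeom : ∑ j : Fin n, r ^ (j : ℕ) ≤ (1 - r)⁻¹ := by
    rw [Fin.sum_univ_eq_sum_range (r ^ ·), range_eq_Ico, ← one_div, ← pow_zero r]
    exact geom_sum_Ico_le_of_lt_one (exp_pos _).le (exp_lt_one_iff.2 (neg_lt_zero.2 hδ))
  calc ∑ j : Fin n, exp (-δ * (n - |(k : ℝ) - j|))
      ≤ ∑ j : Fin n, (r ^ (j : ℕ) + r ^ (Fin.rev j : ℕ)) :=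
        sum_le_sum fun j _ => exp_neg_mul_corner_le hδ.le k j
    _ = 2 * ∑ j : Fin n, r ^ (j : ℕ) := by
        have hrev := Equiv.sum_comp Fin.revPerm (fun j : Fin n => r ^ (j : ℕ))
        simp only [Fin.revPerm_apply] at hrev
        rw [sum_add_distrib, hrev]; ring
    _ ≤ 2 * (1 - r)⁻¹ := by gcongr

theorem corner_decay_product
    (c c₂ γ γ₂ : ℝ) (hc : 0 < c) (hc₂ : 0 < c₂) (hγ₂ : 0 < γ₂) (hγ : γ₂ < γ) :
    ∃ c₃ > 0, ∀ (n : ℕ) (B M : Matrix (Fin n) (Fin n) ℂ),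
      (∀ k l : Fin n, ‖B k l‖ ≤
        c * Real.exp (-γ * ((n : ℝ) - |(k : ℝ) - (l : ℝ)|))) →
      (∀ k l : Fin n, ‖M k l‖ ≤
        c₂ * Real.exp (-γ₂ * |(k : ℝ) - (l : ℝ)|)) →
      ∀ k l : Fin n, ‖(B * M) k l‖ ≤
        c₃ * Real.exp (-γ₂ * ((n : ℝ) - |(k : ℝ) - (l : ℝ)|)) := by
  have hδ : 0 < γ - γ₂ := sub_pos.2 hγ
  have hr : 0 < 1 - exp (-(γ - γ₂)) := sub_pos.2 (exp_lt_one_iff.2 (neg_lt_zero.2 hδ))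
  refine ⟨c * c₂ * (2 * (1 - exp (-(γ - γ₂)))⁻¹), by positivity, ?_⟩
  intro n B M hB hM k l
  set E := exp (-γ₂ * ((n : ℝ) - |(k : ℝ) - l|))
  have hterm : ∀ j, ‖B k j * M j l‖ ≤ c * c₂ * E * exp (-(γ - γ₂) * (n - |(k : ℝ) - j|)) :=
    fun j => calc ‖B k j * M j l‖
      _ ≤ c * exp (-γ * (n - |(k : ℝ) - j|)) * (c₂ * exp (-γ₂ * |(j : ℝ) - l|)) := by
          rw [norm_mul]; exact mul_le_mul (hB k j) (hM j l) (norm_nonneg _) (by positivity)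
      _ = c * c₂ * (exp (-γ * (n - |(k : ℝ) - j|)) * exp (-γ₂ * |(j : ℝ) - l|)) := by ring
      _ ≤ c * c₂ * (E * exp (-(γ - γ₂) * (n - |(k : ℝ) - j|))) := by
          gcongr _ * ?_; exact exp_corner_mul_exp_diag_le hγ₂.le
      _ = _ := by ring
  calc ‖(B * M) k l‖
      ≤ ∑ j, ‖B k j * M j l‖ := by rw [Matrix.mul_apply]; exact norm_sum_le _ _
    _ ≤ ∑ j : Fin n, c * c₂ * E * exp (-(γ - γ₂) * (n - |(k : ℝ) - j|)) :=
        sum_le_sum fun j _ => hterm j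
    _ = c * c₂ * E * ∑ j : Fin n, exp (-(γ - γ₂) * (n - |(k : ℝ) - j|)) := by rw [mul_sum]
    _ ≤ c * c₂ * E * (2 * (1 - exp (-(γ - γ₂)))⁻¹) := by
        gcongr; exact sum_exp_neg_mul_corner_le hδ k
    _ = _ := by ring
end

section
/- Let $E_n$ be hermitian $n\times n$ matrices whose entries satisfy $|(E_n)_{kl}| \le c\big(e^{-2\gamma n}e^{\gamma(k+l)} + e^{-2\gamma n}e^{\gamma|k-l|} + e^{-\gamma(k+l)}\big)$ for fixed $c, \gamma > 0$. Then for every $\varepsilon > 0$ there exist $N$ and $n_0$ such that for all $n \ge n_0$, at most $4N$ eigenvalues of $E_n$ have absolute value exceeding $\varepsilon$. -/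
/-!
The sum of the squared eigenvalues of a hermitian matrix is its squared Frobenius norm
`∑ k, ∑ l, ‖E k l‖ ^ 2`. Under the decay hypothesis the three terms of the entry bound contribute
squares of geometric sums and `(n e^{-γ n})²` to it, so the Frobenius norm of `E n` is bounded by
some `M` independent of `n`. Hence at most `M / ε ^ 2` eigenvalues can exceed `ε` in absolute value.
-/

open Real Matrix Finset

theorem Finset.card_filter_lt_abs_le_sum_sq_div {ι : Type*} (s : Finset ι) (f : ι → ℝ) {ε : ℝ}
    (hε : 0 < ε) : (#{i ∈ s | ε < |f i|} : ℝ) ≤ (∑ i ∈ s, f i ^ 2) / ε ^ 2 := by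
  rw [le_div_iff₀ (by positivity), ← nsmul_eq_mul]
  calc #{i ∈ s | ε < |f i|} • ε ^ 2 ≤ ∑ i ∈ s with ε < |f i|, f i ^ 2 :=
        card_nsmul_le_sum _ _ _ fun i hi => by
          simpa only [sq_abs] using pow_le_pow_left₀ hε.le (mem_filter.1 hi).2.le 2
    _ ≤ ∑ i ∈ s, f i ^ 2 :=
        sum_le_sum_of_subset_of_nonneg (filter_subset _ _) fun _ _ _ => sq_nonneg _

namespace Matrix.IsHermitian

variable {𝕜 n : Type*} [RCLike 𝕜] [Fintype n] [DecidableEq n] {A : Matrix n n 𝕜}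

theorem trace_mul_self_eq_sum_eigenvalues_sq (hA : A.IsHermitian) :
    (A * A).trace = ∑ i, (hA.eigenvalues i : 𝕜) ^ 2 := by
  conv_lhs => rw [hA.spectral_theorem, ← map_mul, Unitary.conjStarAlgAut_apply, trace_mul_cycle,
    Unitary.coe_star_mul_self, one_mul, diagonal_mul_diagonal, trace_diagonal]
  simp [sq]

theorem sum_eigenvalues_sq (hA : A.IsHermitian) :
    ∑ i, hA.eigenvalues i ^ 2 = ∑ i, ∑ j, ‖A i j‖ ^ 2 := by
  have htrace : (A * A).trace = ∑ i, ∑ j, (‖A i j‖ : 𝕜) ^ 2 := by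
    refine sum_congr rfl fun i _ => sum_congr rfl fun j _ => ?_
    change A i j * A j i = _
    rw [← RCLike.mul_conj, ← hA.apply j i]
    rfl
  exact_mod_cast hA.trace_mul_self_eq_sum_eigenvalues_sq.symm.trans htrace

theorem card_filter_lt_abs_eigenvalues_le (hA : A.IsHermitian) {ε M : ℝ} (hε : 0 < ε)
    (hM : ∑ i, ∑ j, ‖A i j‖ ^ 2 ≤ M) :
    #{i | ε < |hA.eigenvalues i|} ≤ ⌈M / ε ^ 2⌉₊ := by
  have hcount := card_filter_lt_abs_le_sum_sq_div univ hA.eigenvalues hε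
  rw [hA.sum_eigenvalues_sq] at hcount
  exact_mod_cast (hcount.trans (by gcongr)).trans (Nat.le_ceil _)

end Matrix.IsHermitian

theorem sum_pow_le_of_injOn {ι : Type*} {r : ℝ} (hr0 : 0 ≤ r) (hr1 : r < 1) {s : Finset ι}
    {f : ι → ℕ} (hf : Set.InjOn f s) : ∑ i ∈ s, r ^ f i ≤ (1 - r)⁻¹ := by
  classical
  rw [← sum_image hf, ← tsum_geometric_of_lt_one hr0 hr1]
  exact (summable_geometric_of_lt_one hr0 hr1).sum_le_tsum _ fun _ _ => pow_nonneg hr0 _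

theorem natCast_mul_pow_le {r : ℝ} (hr0 : 0 ≤ r) (hr1 : r < 1) (n : ℕ) :
    n * r ^ n ≤ (1 - r)⁻¹ :=
  calc (n : ℝ) * r ^ n = ∑ _k ∈ range n, r ^ n := by simp
    _ ≤ ∑ k ∈ range n, r ^ k :=
        sum_le_sum fun k hk => pow_le_pow_of_le_one hr0 hr1.le (mem_range.1 hk).le
    _ ≤ (1 - r)⁻¹ := sum_pow_le_of_injOn hr0 hr1 Function.injective_id.injOn

noncomputable def decayProfile (γ : ℝ) (n : ℕ) (k l : ℝ) : ℝ :=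
  exp (-2 * γ * n) * exp (γ * (k + l)) + exp (-2 * γ * n) * exp (γ * |k - l|) +
    exp (-γ * (k + l))

section decayProfile

variable {γ : ℝ} {n : ℕ}

theorem decayProfile_le (hγ : 0 ≤ γ) (k l : Fin n) :
    decayProfile γ n k l ≤ exp (-γ) ^ (n - k : ℕ) * exp (-γ) ^ (n - l : ℕ) + exp (-γ) ^ n +
      exp (-γ) ^ (k : ℕ) * exp (-γ) ^ (l : ℕ) := by
  simp only [decayProfile, ← exp_nat_mul, ← exp_add, Nat.cast_sub k.is_lt.le,
    Nat.cast_sub l.is_lt.le]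
  have hkl : |(k : ℝ) - l| ≤ n := abs_sub_le_of_nonneg_of_le (by positivity)
    (by exact_mod_cast k.is_lt.le) (by positivity) (by exact_mod_cast l.is_lt.le)
  gcongr ?_ + ?_ + ?_
  · exact le_of_eq (congrArg exp (by ring))
  · exact exp_le_exp.2 (by nlinarith)
  · exact le_of_eq (congrArg exp (by ring))

theorem sum_sum_sq_decayProfile_le (hγ : 0 < γ) :
    ∑ k : Fin n, ∑ l : Fin n, decayProfile γ n k l ^ 2 ≤ 9 * (1 - exp (-γ))⁻¹ ^ 2 := by
  set t := exp (-γ)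
  have ht0 : 0 ≤ t := (exp_pos _).le
  have ht1 : t < 1 := exp_lt_one_iff.2 (neg_neg_of_pos hγ)
  have hsq : ∀ k l : Fin n, decayProfile γ n k l ^ 2 ≤
      3 * (t ^ ((n - k) * 2) * t ^ ((n - l) * 2) + t ^ n * t ^ n +
        t ^ (k * 2 : ℕ) * t ^ (l * 2 : ℕ)) := by
    intro k l
    have h := pow_le_pow_left₀ (by unfold decayProfile; positivity) (decayProfile_le hγ.le k l) 2
    simp only [pow_mul] at h ⊢
    nlinarith [sq_nonneg (t ^ (n - k : ℕ) * t ^ (n - l : ℕ) - t ^ n),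
      sq_nonneg (t ^ n - t ^ (k : ℕ) * t ^ (l : ℕ)),
      sq_nonneg (t ^ (n - k : ℕ) * t ^ (n - l : ℕ) - t ^ (k : ℕ) * t ^ (l : ℕ))]
  have hrev : ∑ k : Fin n, t ^ ((n - k) * 2) ≤ (1 - t)⁻¹ :=
    sum_pow_le_of_injOn ht0 ht1 fun k _ l _ h => Fin.ext (by omega)
  have hfwd : ∑ k : Fin n, t ^ (k * 2 : ℕ) ≤ (1 - t)⁻¹ :=
    sum_pow_le_of_injOn ht0 ht1 fun k _ l _ h => Fin.ext (by omega)
  have hmid := natCast_mul_pow_le ht0 ht1 n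
  calc ∑ k : Fin n, ∑ l : Fin n, decayProfile γ n k l ^ 2
      ≤ ∑ k : Fin n, ∑ l : Fin n, 3 * (t ^ ((n - k) * 2) * t ^ ((n - l) * 2) + t ^ n * t ^ n +
          t ^ (k * 2 : ℕ) * t ^ (l * 2 : ℕ)) :=
        sum_le_sum fun k _ => sum_le_sum fun l _ => hsq k l
    _ = 3 * ((∑ k : Fin n, t ^ ((n - k) * 2)) ^ 2 + (n * t ^ n) ^ 2 +
          (∑ k : Fin n, t ^ (k * 2 : ℕ)) ^ 2) := by
        simp only [← mul_sum, sum_add_distrib, sq, sum_mul_sum, sum_const, card_univ,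
          Fintype.card_fin, nsmul_eq_mul]
        ring
    _ ≤ 3 * ((1 - t)⁻¹ ^ 2 + (1 - t)⁻¹ ^ 2 + (1 - t)⁻¹ ^ 2) := by gcongr
    _ = 9 * (1 - t)⁻¹ ^ 2 := by ring

theorem sum_sq_norm_le_of_le_decayProfile {𝕜 : Type*} [RCLike 𝕜] (hγ : 0 < γ) {c : ℝ}
    {A : Matrix (Fin n) (Fin n) 𝕜} (hA : ∀ k l : Fin n, ‖A k l‖ ≤ c * decayProfile γ n k l) :
    ∑ k, ∑ l, ‖A k l‖ ^ 2 ≤ c ^ 2 * (9 * (1 - exp (-γ))⁻¹ ^ 2) :=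
  calc ∑ k, ∑ l, ‖A k l‖ ^ 2 ≤ ∑ k : Fin n, ∑ l : Fin n, c ^ 2 * decayProfile γ n k l ^ 2 :=
        sum_le_sum fun k _ => sum_le_sum fun l _ => by
          rw [← mul_pow]; exact pow_le_pow_left₀ (norm_nonneg _) (hA k l) 2
    _ ≤ c ^ 2 * (9 * (1 - exp (-γ))⁻¹ ^ 2) := by
        simp only [← mul_sum]
        gcongr
        exact sum_sum_sq_decayProfile_le hγ

end decayProfile

theorem eigenvalue_clustering_general
    (c γ : ℝ) (hγ : 0 < γ)
    (E : (n : ℕ) → Matrix (Fin n) (Fin n) ℂ)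
    (hherm : ∀ n, (E n).IsHermitian)
    (hbound : ∀ (n : ℕ) (k l : Fin n), ‖E n k l‖ ≤
      c * (Real.exp (-2 * γ * n) * Real.exp (γ * ((k : ℝ) + (l : ℝ))) +
        Real.exp (-2 * γ * n) * Real.exp (γ * |(k : ℝ) - (l : ℝ)|) +
        Real.exp (-γ * ((k : ℝ) + (l : ℝ))))) :
    ∀ ε > 0, ∃ N n₀ : ℕ, ∀ n ≥ n₀,
      (Finset.univ.filter fun i : Fin n =>
        ε < |(hherm n).eigenvalues i|).card ≤ 4 * N := by
  intro ε hε
  refine ⟨⌈c ^ 2 * (9 * (1 - exp (-γ))⁻¹ ^ 2) / ε ^ 2⌉₊, 0, fun n _ => ?_⟩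
  have hfrob := sum_sq_norm_le_of_le_decayProfile hγ (hbound n)
  exact ((hherm n).card_filter_lt_abs_eigenvalues_le hε hfrob).trans
    (Nat.le_mul_of_pos_left _ (by norm_num))

theorem eigenvalue_clustering
    (c γ : ℝ) (hc : 0 < c) (hγ : 0 < γ)
    (E : (n : ℕ) → Matrix (Fin n) (Fin n) ℂ)
    (hherm : ∀ n, (E n).IsHermitian)
    (hbound : ∀ (n : ℕ) (k l : Fin n), ‖E n k l‖ ≤
      c * (Real.exp (-2 * γ * n) * Real.exp (γ * ((k : ℝ) + (l : ℝ))) +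
        Real.exp (-2 * γ * n) * Real.exp (γ * |(k : ℝ) - (l : ℝ)|) +
        Real.exp (-γ * ((k : ℝ) + (l : ℝ))))) :
    ∀ ε > 0, ∃ N n₀ : ℕ, ∀ n ≥ n₀,
      (Finset.univ.filter fun i : Fin n =>
        ε < |(hherm n).eigenvalues i|).card ≤ 4 * N :=
  eigenvalue_clustering_general c γ hγ E hherm hbound
end
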